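/- Let m be an odd positive integer. Then: γ_m(−1) = −1 and γ_m(m−1) = m−1 (these are fixed points of γ_m); the set A_m = {0, 1, …, m−2} is invariant under γ_m (γ_m(A_m) ⊆ A_m); and for every j ∈ ℤ there exists p ∈ ℕ such that γ_m^{(p)}(j) ∈ A_m ∪ {−1, m−1}. -/
import Mathlib


/-- The map `γ_m : ℤ → ℤ`, `γ_m(j) = (m-1+j)/2` if `j` is even and `(j-1)/2` if `j` is odd. -/
def gammaMap (m j : ℤ) : ℤ :=
  if Even j then (m - 1 + j) / 2 else (j - 1) / 2

lemma gammaMap_even {m j : ℤ} (h : j % 2 = 0) (hm : m % 2 = 1) :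
    2 * gammaMap m j = m - 1 + j := by
  rw [gammaMap, if_pos (Int.even_iff.mpr h)]
  omega

lemma gammaMap_odd {m j : ℤ} (h : j % 2 = 1) :
    2 * gammaMap m j = j - 1 := by
  rw [gammaMap, if_neg (by rw [Int.even_iff]; omega)]
  omega

lemma reach (m : ℤ) (hm : m % 2 = 1) (hm' : 0 < m) :
    ∀ n : ℕ, ∀ j : ℤ, -1 - n ≤ j → j ≤ m - 1 + n →
      ∃ p : ℕ, (gammaMap m)^[p] j ∈ Set.Icc (0 : ℤ) (m - 2) ∪ {-1, m - 1} := by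
  intro n
  induction n with
  | zero =>
    intro j h1 h2
    exact ⟨0, by simp [Set.mem_Icc, Set.mem_insert_iff]; omega⟩
  | succ n ih =>
    intro j h1 h2
    by_cases hj : -1 ≤ j ∧ j ≤ m - 1
    · exact ⟨0, by simp [Set.mem_Icc, Set.mem_insert_iff]; omega⟩
    · have hpar := Int.emod_two_eq j
      have hg : -1 - (n : ℤ) ≤ gammaMap m j ∧ gammaMap m j ≤ m - 1 + n := by
        rcases hpar with h | h
        · have := gammaMap_even h hm; omega
        · have := gammaMap_odd (m := m) h; omega
      obtain ⟨p, hp⟩ := ih (gammaMap m j) hg.1 hg.2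
      exact ⟨p + 1, by rwa [Function.iterate_succ_apply]⟩

/-- For an odd positive integer `m`: `-1` and `m-1` are fixed points of `γ_m`, the set
`A_m = {0, …, m-2}` is invariant under `γ_m`, and every integer reaches
`A_m ∪ {-1, m-1}` after finitely many iterations of `γ_m`. -/
theorem stmt_4 (m : ℤ) (hm : Odd m) (hm' : 0 < m) :
    gammaMap m (-1) = -1 ∧
    gammaMap m (m - 1) = m - 1 ∧
    (∀ j ∈ Set.Icc (0 : ℤ) (m - 2), gammaMap m j ∈ Set.Icc (0 : ℤ) (m - 2)) ∧
    (∀ j : ℤ, ∃ p : ℕ,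
      (gammaMap m)^[p] j ∈ Set.Icc (0 : ℤ) (m - 2) ∪ {-1, m - 1}) := by
  have hm2 : m % 2 = 1 := Int.odd_iff.mp hm
  refine ⟨?_, ?_, ?_, ?_⟩
  · have := gammaMap_odd (m := m) (j := -1) (by norm_num); omega
  · have := gammaMap_even (j := m - 1) (by omega) hm2; omega
  · intro j hj
    rw [Set.mem_Icc] at hj ⊢
    rcases Int.emod_two_eq j with h | h
    · have := gammaMap_even h hm2; omega
    · have := gammaMap_odd (m := m) h; omega
  · intro j
    exact reach m hm2 hm' (j.natAbs + m.natAbs) j (by omega) (by omega)
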